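/- With K, 𝒳, Ω as in the generalized Sleeping Beauty setup (K finite, P(𝒳 = ∅) < 1), the probability P_E defined on ℱ by P_E(F ∩ {S = x}) = (1/E[|𝒳|]) · P(F ∩ {x ∈ 𝒳}) for objective F and x ∈ K (and P_E(S = ∂) = 0) satisfies the principles (PN), (PI), and (PEI). -/

import Mathlib

open scoped Classical
open Finset

/-- Probability of a set under a weight function on a finite type. -/
noncomputable def pr {α : Type*} [Fintype α] (μ : α → ℝ) (A : Set α) : ℝ :=
  ∑ a : α, if a ∈ A then μ a else 0

/-- Conditional probability. -/
noncomputable def cpr {α : Type*} [Fintype α] (μ : α → ℝ) (A B : Set α) : ℝ :=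
  pr μ (A ∩ B) / pr μ B

/-- Expectation. -/
noncomputable def ex {α : Type*} [Fintype α] (μ : α → ℝ) (f : α → ℝ) : ℝ :=
  ∑ a : α, μ a * f a

/-- A probability weight: nonnegative and summing to one. -/
def IsProb {α : Type*} [Fintype α] (μ : α → ℝ) : Prop :=
  (∀ a, 0 ≤ μ a) ∧ ∑ a : α, μ a = 1

/-! Under `P_E` the mass of an event is `c = E[|𝒳|]⁻¹` times the `P`-expectation of the number of
awakenings `x ∈ 𝒳` it contains. The event `F ∩ {S = x}` contains at most one awakening, so its mass
is `c · P(F ∩ {x ∈ 𝒳})` and `c` cancels in (PEI); the event `{𝒳 = B}` contains `|B|` of them, which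
gives (PI); the whole space has mass `c · E[|𝒳|] = 1`, and `E[|𝒳|] ≥ P(𝒳 ≠ ∅) > 0`. -/

section Weights
variable {α : Type*} [Fintype α] {μ : α → ℝ}

lemma pr_empty (μ : α → ℝ) : pr μ ∅ = 0 := by
  simp [pr]

lemma pr_add_pr_compl (μ : α → ℝ) (A : Set α) : pr μ A + pr μ Aᶜ = ∑ a, μ a := by
  rw [pr, pr, ← sum_add_distrib]
  refine sum_congr rfl fun a _ => ?_
  by_cases ha : a ∈ A <;> simp [ha]

lemma eq_zero_of_pr_eq_zero (hμ : ∀ a, 0 ≤ μ a) {A : Set α} (hA : pr μ A = 0) {a : α}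
    (ha : a ∈ A) : μ a = 0 := by
  have hnonneg : ∀ b ∈ univ, 0 ≤ if b ∈ A then μ b else 0 := fun b _ => by
    split_ifs <;> simp [hμ b]
  simpa [ha] using (sum_eq_zero_iff_of_nonneg hnonneg).mp hA a (mem_univ a)

lemma pr_le_ex (hμ : ∀ a, 0 ≤ μ a) {A : Set α} {f : α → ℝ} (hf₀ : ∀ a, 0 ≤ f a)
    (hf₁ : ∀ a ∈ A, 1 ≤ f a) : pr μ A ≤ ex μ f := by
  refine sum_le_sum fun a _ => ?_
  split_ifs with ha
  · simpa using mul_le_mul_of_nonneg_left (hf₁ a ha) (hμ a)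
  · exact mul_nonneg (hμ a) (hf₀ a)

end Weights

lemma ex_card_pos {Ω₀ K : Type*} [Fintype Ω₀] {P0 : Ω₀ → ℝ} (hP0 : IsProb P0)
    (𝒳 : Ω₀ → Finset K) (hne : pr P0 {o | 𝒳 o = ∅} < 1) :
    0 < ex P0 (fun o => ((𝒳 o).card : ℝ)) := by
  have hcompl := pr_add_pr_compl P0 {o | 𝒳 o = ∅}
  have hle : pr P0 {o | 𝒳 o = ∅}ᶜ ≤ ex P0 (fun o => ((𝒳 o).card : ℝ)) :=
    pr_le_ex hP0.1 (fun o => Nat.cast_nonneg _) fun o ho => by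
      simpa [Finset.one_le_card, Finset.nonempty_iff_ne_empty] using ho
  linarith [hP0.2]

structure IsThirderWeight {Ω₀ K : Type*} [DecidableEq K] (P0 : Ω₀ → ℝ) (𝒳 : Ω₀ → Finset K)
    (c : ℝ) (PE : Ω₀ × Option K → ℝ) : Prop where
  apply_some : ∀ o x, PE (o, some x) = c * P0 o * if x ∈ 𝒳 o then 1 else 0
  apply_none : ∀ o, PE (o, none) = 0

namespace IsThirderWeight
variable {Ω₀ K : Type*} [Fintype Ω₀] [Fintype K] [DecidableEq K] {P0 : Ω₀ → ℝ}
  {𝒳 : Ω₀ → Finset K} {c : ℝ} {PE : Ω₀ × Option K → ℝ}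

lemma pr_eq (hPE : IsThirderWeight P0 𝒳 c PE) (A : Set (Ω₀ × Option K)) :
    pr PE A = c * ∑ o, P0 o * #{x ∈ 𝒳 o | (o, some x) ∈ A} := by
  rw [pr, Fintype.sum_prod_type, mul_sum]
  refine sum_congr rfl fun o _ => ?_
  simp only [Fintype.sum_option, hPE.apply_none, hPE.apply_some, ite_self, zero_add]
  rw [natCast_card_filter, mul_sum, mul_sum, ← sum_subset (subset_univ (𝒳 o))]
  · refine sum_congr rfl fun x hx => ?_
    split_ifs <;> simp_all
  · intro x _ hx
    simp [hx]

lemma pr_fst_mem (hPE : IsThirderWeight P0 𝒳 c PE) (F : Set Ω₀) :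
    pr PE {ω | ω.1 ∈ F} = c * ∑ o, if o ∈ F then P0 o * #(𝒳 o) else 0 := by
  rw [hPE.pr_eq]
  congr 1
  refine sum_congr rfl fun o _ => ?_
  by_cases ho : o ∈ F <;> simp [ho]

lemma pr_fst_mem_inter_snd_eq_some (hPE : IsThirderWeight P0 𝒳 c PE) (F : Set Ω₀) (x : K) :
    pr PE ({ω | ω.1 ∈ F} ∩ {ω | ω.2 = some x}) = c * pr P0 (F ∩ {o | x ∈ 𝒳 o}) := by
  rw [hPE.pr_eq, pr]
  congr 1
  refine sum_congr rfl fun o _ => ?_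
  by_cases ho : o ∈ F <;> by_cases hx : x ∈ 𝒳 o <;> simp [ho, hx, filter_eq']

lemma pr_snd_eq_some (hPE : IsThirderWeight P0 𝒳 c PE) (x : K) :
    pr PE {ω | ω.2 = some x} = c * pr P0 {o | x ∈ 𝒳 o} := by
  simpa using hPE.pr_fst_mem_inter_snd_eq_some Set.univ x

lemma pr_fst_mem_eq_zero (hPE : IsThirderWeight P0 𝒳 c PE) (hP0 : ∀ o, 0 ≤ P0 o) {F : Set Ω₀}
    (hF : pr P0 F = 0) : pr PE {ω | ω.1 ∈ F} = 0 := by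
  rw [hPE.pr_fst_mem, sum_eq_zero, mul_zero]
  intro o _
  split_ifs with ho
  · simp [eq_zero_of_pr_eq_zero hP0 hF ho]
  · rfl

lemma pr_snd_mem_eq_one (hPE : IsThirderWeight P0 𝒳 c PE)
    (hc : c * ex P0 (fun o => ((𝒳 o).card : ℝ)) = 1) :
    pr PE {ω | ∃ x, ω.2 = some x ∧ x ∈ 𝒳 ω.1} = 1 := by
  simp [hPE.pr_eq, ← hc, ex]

lemma cpr_snd_eq_some_fst_eq (hPE : IsThirderWeight P0 𝒳 c PE) (x : K) {B : Finset K}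
    (hB : 0 < pr PE {ω | 𝒳 ω.1 = B}) :
    cpr PE {ω | ω.2 = some x} {ω | 𝒳 ω.1 = B} = if x ∈ B then (#B : ℝ)⁻¹ else 0 := by
  have hden : pr PE {ω | 𝒳 ω.1 = B} = c * #B * pr P0 {o | 𝒳 o = B} := by
    refine (hPE.pr_fst_mem {o | 𝒳 o = B}).trans ?_
    rw [mul_assoc, pr]
    congr 1
    rw [mul_sum]
    refine sum_congr rfl fun o _ => ?_
    by_cases ho : 𝒳 o = B <;> simp [ho, mul_comm]
  have hnum : pr PE ({ω | ω.2 = some x} ∩ {ω | 𝒳 ω.1 = B}) =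
      c * if x ∈ B then pr P0 {o | 𝒳 o = B} else 0 := by
    refine (Set.inter_comm _ _ ▸ hPE.pr_fst_mem_inter_snd_eq_some {o | 𝒳 o = B} x).trans ?_
    congr 1
    split_ifs with hx
    · congr 1
      exact Set.inter_eq_left.mpr fun o (ho : 𝒳 o = B) => show x ∈ 𝒳 o from ho ▸ hx
    · convert pr_empty P0
      exact Set.eq_empty_of_forall_notMem fun o ⟨(ho : 𝒳 o = B), hxo⟩ => hx (ho ▸ hxo)
  obtain ⟨hcB, hp⟩ := mul_ne_zero_iff.mp (hden ▸ hB.ne')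
  have hc := left_ne_zero_of_mul hcB
  rw [cpr, hnum, hden]
  split_ifs
  · field_simp
  · simp

lemma cpr_fst_mem_snd_eq_some (hPE : IsThirderWeight P0 𝒳 c PE) (hc : c ≠ 0) (F : Set Ω₀)
    (x : K) : cpr PE {ω | ω.1 ∈ F} {ω | ω.2 = some x} = cpr P0 F {o | x ∈ 𝒳 o} := by
  rw [cpr, cpr, hPE.pr_fst_mem_inter_snd_eq_some, hPE.pr_snd_eq_some, mul_div_mul_left _ _ hc]

end IsThirderWeight

/-- Theorem: the Thirder measure `P_E`, defined by
`P_E(F ∩ {S = x}) = E[|𝒳|]⁻¹ · P(F ∩ {x ∈ 𝒳})` (and `P_E(S = ∂) = 0`),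
satisfies the principles (PN), (PI) and (PEI). -/
theorem stmt1 {Ω₀ K : Type*} [Fintype Ω₀] [Fintype K] [DecidableEq K]
    (P0 : Ω₀ → ℝ) (𝒳 : Ω₀ → Finset K)
    (hP0 : IsProb P0)
    (hne : pr P0 {o | 𝒳 o = ∅} < 1)
    (PE : Ω₀ × Option K → ℝ)
    (hPE1 : ∀ (o : Ω₀) (x : K),
      PE (o, some x) = (ex P0 (fun o' => ((𝒳 o').card : ℝ)))⁻¹ * P0 o *
        (if x ∈ 𝒳 o then 1 else 0))
    (hPE2 : ∀ o : Ω₀, PE (o, none) = 0) :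
    -- (PN) (a)
    (∀ F : Set Ω₀, pr P0 F = 0 → pr PE {ω | ω.1 ∈ F} = 0) ∧
    -- (PN) (b)
    pr PE {ω | ∃ x : K, ω.2 = some x ∧ x ∈ 𝒳 ω.1} = 1 ∧
    -- (PI)
    (∀ (x : K) (B : Finset K), B ≠ ∅ →
      0 < pr PE {ω | 𝒳 ω.1 = B} →
      cpr PE {ω | ω.2 = some x} {ω | 𝒳 ω.1 = B} = if x ∈ B then (B.card : ℝ)⁻¹ else 0) ∧
    -- (PEI)
    (∀ (F : Set Ω₀) (x : K), 0 < pr PE {ω | ω.2 = some x} →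
      cpr PE {ω | ω.1 ∈ F} {ω | ω.2 = some x} = cpr P0 F {o | x ∈ 𝒳 o}) := by
  have hE : ex P0 (fun o => ((𝒳 o).card : ℝ)) ≠ 0 := (ex_card_pos hP0 𝒳 hne).ne'
  have hPE : IsThirderWeight P0 𝒳 (ex P0 (fun o => ((𝒳 o).card : ℝ)))⁻¹ PE := ⟨hPE1, hPE2⟩
  exact ⟨fun _ hF => hPE.pr_fst_mem_eq_zero hP0.1 hF,
    hPE.pr_snd_mem_eq_one (inv_mul_cancel₀ hE),
    fun x _ _ hB => hPE.cpr_snd_eq_some_fst_eq x hB,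
    fun F x _ => hPE.cpr_fst_mem_snd_eq_some (inv_ne_zero hE) F x⟩
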